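/- arXiv:2412.06746 — 2 statements merged into one kernel-verified Lean document; each statement's English description precedes it below -/
import Mathlib

section
/- Let n ≥ 3 (or more generally 2s < n with s ∈ (0,1)), γ < 2s, σ* := -n + 2s, and α̃* := 1 + (2s - γ)/(-σ*). Suppose g : (0,∞) → (0,∞) is continuous and liminf_{t→0⁺} t^{-α̃*} g(t) > 0. Then for every μ̄ > 0, defining Ψ_k(x) := |x|^{2s} · inf{ g(t)·|x|^{-γ}/t : k·|x|^{σ*} ≤ t ≤ μ̄ } for |x| large, one has liminf_{|x|→∞} Ψ_k(x) > 0 for each k > 0, and lim_{k→∞} liminf_{|x|→∞} Ψ_k(x) = +∞. -/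
open Real Set Filter

/-- For `2s < n`, `γ < 2s`, `σ* := -n + 2s`,
`α̃* := 1 + (2s - γ)/(-σ*)`: if `g : (0,∞) → (0,∞)` is continuous with
`liminf_{t→0⁺} t^{-α̃*} g(t) > 0`, then for every `μ̄ > 0`, setting
`Ψ_k(x) := |x|^{2s} inf { g(t) |x|^{-γ}/t : k |x|^{σ*} ≤ t ≤ μ̄ }`, one has
`liminf_{|x|→∞} Ψ_k > 0` for each `k > 0`, and
`liminf_{|x|→∞} Ψ_k → +∞` as `k → ∞`. -/
theorem stmt9 (n : ℕ) (s γ : ℝ) (hs : s ∈ Set.Ioo (0:ℝ) 1) (h2s : 2*s < n)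
    (hγ : γ < 2*s) (g : ℝ → ℝ) (hgc : ContinuousOn g (Set.Ioi 0))
    (hgp : ∀ t : ℝ, 0 < t → 0 < g t)
    (hliminf : 0 < Filter.liminf
      (fun t : ℝ => t ^ (-(1 + (2*s - γ)/(-(-(n:ℝ) + 2*s)))) * g t)
      (nhdsWithin 0 (Set.Ioi 0)))
    (μ : ℝ) (hμ : 0 < μ) :
    (∀ k : ℝ, 0 < k →
      0 < Filter.liminf
        (fun X : ℝ =>
          X ^ (2*s) *
            sInf ((fun t : ℝ => g t * X ^ (-γ) / t) ''
              Set.Icc (k * X ^ (-(n:ℝ) + 2*s)) μ))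
        Filter.atTop) ∧
    Filter.Tendsto
      (fun k : ℝ =>
        Filter.liminf
          (fun X : ℝ =>
            X ^ (2*s) *
              sInf ((fun t : ℝ => g t * X ^ (-γ) / t) ''
                Set.Icc (k * X ^ (-(n:ℝ) + 2*s)) μ))
          Filter.atTop)
      Filter.atTop Filter.atTop := by
  obtain ⟨hs0, hs1⟩ := hs
  set σ : ℝ := -(n:ℝ) + 2*s with hσdef
  have hσ : σ < 0 := by rw [hσdef]; linarith
  have hσne : σ ≠ 0 := ne_of_lt hσ
  set β : ℝ := (2*s - γ)/(-σ) with hβdef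
  have hβ : 0 < β := div_pos (by linarith) (by linarith)
  have hσβ : σ * β = γ - 2*s := by
    have h : -σ ≠ 0 := by intro h; apply hσne; linarith
    rw [hβdef, ← mul_div_assoc, div_eq_iff h]; ring
  -- extract information from the liminf hypothesis
  rw [Filter.liminf_eq] at hliminf
  set S : Set ℝ :=
    {a : ℝ | ∀ᶠ t in nhdsWithin 0 (Set.Ioi 0), a ≤ t ^ (-(1+β)) * g t} with hSdef
  have hSne : S.Nonempty := by
    by_contra h
    rw [Set.not_nonempty_iff_eq_empty] at h
    rw [h, Real.sSup_empty] at hliminf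
    exact lt_irrefl 0 hliminf
  have hSbdd : BddAbove S := by
    by_contra h
    rw [csSup_of_not_bddAbove h, Real.sSup_empty] at hliminf
    exact lt_irrefl 0 hliminf
  obtain ⟨c, hcS, hc⟩ := exists_lt_of_lt_csSup hSne hliminf
  set C : ℝ := sSup S + 1 with hCdef
  have hC : 0 < C := by rw [hCdef]; linarith
  have hCfree : ∃ᶠ t in nhdsWithin 0 (Set.Ioi 0), t ^ (-(1+β)) * g t < C := by
    have hnot : C ∉ S := by
      intro h
      have := le_csSup hSbdd h
      rw [hCdef] at this; linarith
    rw [hSdef, Set.mem_setOf_eq] at hnot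
    simpa only [Filter.not_eventually, not_le] using hnot
  -- a small δ and the lower bound g t ≥ c t^(1+β) on (0,δ]
  obtain ⟨δ₀, hδ₀, hsub⟩ := mem_nhdsGT_iff_exists_Ioc_subset.mp hcS
  set δ : ℝ := min δ₀ μ with hδdef
  have hδpos : 0 < δ := lt_min hδ₀ hμ
  have hδμ : δ ≤ μ := min_le_right _ _
  have hglow : ∀ t : ℝ, 0 < t → t ≤ δ → c * t ^ (1+β) ≤ g t := by
    intro t ht htδ
    have h1 : c ≤ t ^ (-(1+β)) * g t :=
      hsub ⟨ht, le_trans htδ (min_le_left _ _)⟩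
    have h2 : (0:ℝ) < t ^ (1+β) := rpow_pos_of_pos ht _
    rw [rpow_neg ht.le] at h1
    calc c * t^(1+β) ≤ ((t^(1+β))⁻¹ * g t) * t^(1+β) :=
          mul_le_mul_of_nonneg_right h1 h2.le
      _ = g t := by field_simp
  -- positive minimum of g t / t on [δ, μ]
  have hsubset : Set.Icc δ μ ⊆ Set.Ioi 0 := fun t ht => lt_of_lt_of_le hδpos ht.1
  have hcont : ContinuousOn (fun t => g t / t) (Set.Icc δ μ) :=
    (hgc.mono hsubset).div continuousOn_id (fun t ht => ne_of_gt (hsubset ht))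
  obtain ⟨t₀, ht₀, hminOn⟩ :=
    isCompact_Icc.exists_isMinOn (Set.nonempty_Icc.mpr hδμ) hcont
  set m : ℝ := g t₀ / t₀ with hmdef
  have ht₀pos : (0:ℝ) < t₀ := hsubset ht₀
  have hm_pos : 0 < m := div_pos (hgp _ ht₀pos) ht₀pos
  have hm : ∀ t ∈ Set.Icc δ μ, m ≤ g t / t := fun t ht => isMinOn_iff.mp hminOn t ht
  -- main estimate: liminf Ψ_k ≥ c k^β for every k > 0
  have hmain : ∀ k : ℝ, 0 < k →
      c * k ^ β ≤ Filter.liminf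
        (fun X : ℝ =>
          X ^ (2*s) *
            sInf ((fun t : ℝ => g t * X ^ (-γ) / t) ''
              Set.Icc (k * X ^ σ) μ))
        Filter.atTop := by
    intro k hk
    set Ψ : ℝ → ℝ := fun X : ℝ =>
      X ^ (2*s) *
        sInf ((fun t : ℝ => g t * X ^ (-γ) / t) ''
          Set.Icc (k * X ^ σ) μ) with hΨdef
    -- eventual lower bound
    have htend0 : Tendsto (fun X : ℝ => k * X ^ σ) atTop (nhds 0) := by
      have h1 : Tendsto (fun X : ℝ => X ^ σ) atTop (nhds 0) := by
        have h2 := tendsto_rpow_neg_atTop (y := -σ) (by linarith)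
        simpa using h2
      simpa using h1.const_mul k
    have hE2 : ∀ᶠ X : ℝ in atTop, k * X ^ σ < δ :=
      htend0.eventually (gt_mem_nhds hδpos)
    have htendm : Tendsto (fun X : ℝ => m * X ^ (2*s - γ)) atTop atTop :=
      (tendsto_rpow_atTop (by linarith)).const_mul_atTop hm_pos
    have hE3 : ∀ᶠ X : ℝ in atTop, c * k ^ β ≤ m * X ^ (2*s - γ) :=
      htendm.eventually_ge_atTop _
    have hlow : ∀ᶠ X : ℝ in atTop, c * k ^ β ≤ Ψ X := by
      filter_upwards [eventually_ge_atTop (1:ℝ), hE2, hE3] with X hX1 hX2 hX3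
      have hX : (0:ℝ) < X := lt_of_lt_of_le one_pos hX1
      have hXσ : (0:ℝ) < X ^ σ := rpow_pos_of_pos hX σ
      have hkXσ : 0 < k * X ^ σ := mul_pos hk hXσ
      have hne : ((fun t : ℝ => g t * X ^ (-γ) / t) '' Set.Icc (k * X ^ σ) μ).Nonempty :=
        ⟨_, Set.mem_image_of_mem _ ⟨le_trans hX2.le hδμ, le_refl μ⟩⟩
      have key : ∀ y ∈ (fun t : ℝ => g t * X ^ (-γ) / t) '' Set.Icc (k * X ^ σ) μ,
          c * k ^ β * X ^ (-(2*s)) ≤ y := by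
        rintro y ⟨t, ht, rfl⟩
        dsimp only
        have ht0 : 0 < t := lt_of_lt_of_le hkXσ ht.1
        have hXγ : (0:ℝ) < X ^ (-γ) := rpow_pos_of_pos hX _
        have hform : g t * X ^ (-γ) / t = (g t / t) * X ^ (-γ) := by ring
        rw [hform]
        rcases le_or_gt t δ with hcase | hcase
        · -- t ≤ δ : use the lower bound near 0
          have h1 : c * t ^ β ≤ g t / t := by
            have hg := hglow t ht0 hcase
            rw [rpow_add ht0, rpow_one] at hg
            rw [le_div_iff₀ ht0]
            calc c * t ^ β * t = c * (t * t ^ β) := by ring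
              _ ≤ g t := hg
          have h2 : (k * X ^ σ) ^ β ≤ t ^ β :=
            rpow_le_rpow hkXσ.le ht.1 hβ.le
          have h3 : (k * X ^ σ) ^ β = k ^ β * X ^ (σ * β) := by
            rw [Real.mul_rpow hk.le hXσ.le, ← Real.rpow_mul hX.le]
          have hA : c * (k ^ β * X ^ (σ * β)) ≤ g t / t := by
            rw [← h3]
            calc c * (k * X ^ σ) ^ β ≤ c * t ^ β :=
                  mul_le_mul_of_nonneg_left h2 hc.le
              _ ≤ g t / t := h1
          have hexp : X ^ (σ * β) * X ^ (-γ) = X ^ (-(2*s)) := by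
            rw [← Real.rpow_add hX, show σ * β + -γ = -(2*s) by linarith]
          calc c * k ^ β * X ^ (-(2*s))
              = c * (k ^ β * X ^ (σ * β)) * X ^ (-γ) := by rw [← hexp]; ring
            _ ≤ (g t / t) * X ^ (-γ) := mul_le_mul_of_nonneg_right hA hXγ.le
        · -- δ ≤ t : use the minimum m
          have h1 : m ≤ g t / t := hm t ⟨hcase.le, ht.2⟩
          have h2 : c * k ^ β * X ^ (-(2*s)) ≤ m * X ^ (-γ) := by
            have h3 := mul_le_mul_of_nonneg_right hX3 (rpow_pos_of_pos hX (-(2*s))).le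
            calc c * k ^ β * X ^ (-(2*s)) ≤ m * X ^ (2*s - γ) * X ^ (-(2*s)) := h3
              _ = m * X ^ (-γ) := by
                  rw [mul_assoc, ← Real.rpow_add hX,
                    show 2*s - γ + -(2*s) = -γ by ring]
          exact le_trans h2 (mul_le_mul_of_nonneg_right h1 hXγ.le)
      have hInf : c * k ^ β * X ^ (-(2*s)) ≤
          sInf ((fun t : ℝ => g t * X ^ (-γ) / t) '' Set.Icc (k * X ^ σ) μ) :=
        le_csInf hne key
      have hone : X ^ (2*s) * X ^ (-(2*s)) = 1 := by
        rw [← Real.rpow_add hX]; simp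
      calc c * k ^ β = c * k ^ β * (X ^ (2*s) * X ^ (-(2*s))) := by rw [hone, mul_one]
        _ = X ^ (2*s) * (c * k ^ β * X ^ (-(2*s))) := by ring
        _ ≤ Ψ X := mul_le_mul_of_nonneg_left hInf (rpow_nonneg hX.le _)
    -- frequent upper bound
    have hupp : ∃ᶠ X : ℝ in atTop, Ψ X ≤ C * k ^ β := by
      rw [Filter.frequently_atTop]
      intro b
      set b' : ℝ := max b 1 with hb'def
      have hb' : 0 < b' := lt_of_lt_of_le one_pos (le_max_right _ _)
      have hr : 0 < min μ (k * b' ^ σ) := lt_min hμ (mul_pos hk (rpow_pos_of_pos hb' σ))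
      have hev : ∀ᶠ t in nhdsWithin 0 (Set.Ioi 0), t ∈ Set.Ioc 0 (min μ (k * b' ^ σ)) :=
        Filter.eventually_of_mem (Ioc_mem_nhdsGT_of_mem ⟨le_refl 0, hr⟩) (fun t ht => ht)
      obtain ⟨t, htC, ht0, htle⟩ := (hCfree.and_eventually hev).exists
      have htμ : t ≤ μ := le_trans htle (min_le_left _ _)
      have htb : t ≤ k * b' ^ σ := le_trans htle (min_le_right _ _)
      set X : ℝ := (t / k) ^ σ⁻¹ with hXdef
      have htk : 0 < t / k := div_pos ht0 hk
      have hXpos : 0 < X := rpow_pos_of_pos htk _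
      have hXσ : X ^ σ = t / k := Real.rpow_inv_rpow htk.le hσne
      have hkX : k * X ^ σ = t := by rw [hXσ]; field_simp
      have hXb' : b' ≤ X := by
        have h1 : X ^ σ ≤ b' ^ σ := by
          rw [hXσ, div_le_iff₀ hk]
          calc t ≤ k * b' ^ σ := htb
            _ = b' ^ σ * k := mul_comm _ _
        exact (Real.rpow_le_rpow_iff_of_neg hXpos hb' hσ).mp h1
      refine ⟨X, le_trans (le_max_left b 1) hXb', ?_⟩
      have hmem : t ∈ Set.Icc (k * X ^ σ) μ := by
        rw [hkX]; exact ⟨le_refl t, htμ⟩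
      have hbdd : BddBelow ((fun t : ℝ => g t * X ^ (-γ) / t) '' Set.Icc (k * X ^ σ) μ) := by
        refine ⟨0, ?_⟩
        rintro y ⟨u, hu, rfl⟩
        have hu0 : 0 < u := lt_of_lt_of_le (by rw [hkX]; exact ht0) hu.1
        exact le_of_lt (div_pos (mul_pos (hgp u hu0) (rpow_pos_of_pos hXpos _)) hu0)
      have hInf : sInf ((fun t : ℝ => g t * X ^ (-γ) / t) '' Set.Icc (k * X ^ σ) μ)
          ≤ g t * X ^ (-γ) / t := csInf_le hbdd (Set.mem_image_of_mem _ hmem)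
      have hgt : g t ≤ C * t ^ (1+β) := by
        have h2 : (0:ℝ) < t ^ (1+β) := rpow_pos_of_pos ht0 _
        rw [rpow_neg ht0.le] at htC
        calc g t = t^(1+β) * ((t^(1+β))⁻¹ * g t) := by field_simp
          _ ≤ t^(1+β) * C := mul_le_mul_of_nonneg_left htC.le h2.le
          _ = C * t^(1+β) := mul_comm _ _
      have h5 : g t / t ≤ C * t ^ β := by
        rw [div_le_iff₀ ht0]
        calc g t ≤ C * t^(1+β) := hgt
          _ = C * t ^ β * t := by
              rw [rpow_add ht0, rpow_one]; ring
      have h6 : t ^ β = k ^ β * X ^ (σ*β) := by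
        rw [← hkX, Real.mul_rpow hk.le (rpow_pos_of_pos hXpos σ).le,
          ← Real.rpow_mul hXpos.le]
      have h4 : g t * X ^ (-γ) / t ≤ C * k ^ β * X ^ (σ*β + -γ) := by
        calc g t * X^(-γ)/t = (g t / t) * X^(-γ) := by ring
          _ ≤ (C * t^β) * X^(-γ) :=
              mul_le_mul_of_nonneg_right h5 (rpow_pos_of_pos hXpos _).le
          _ = C * k^β * (X^(σ*β) * X^(-γ)) := by rw [h6]; ring
          _ = C * k^β * X^(σ*β + -γ) := by rw [← Real.rpow_add hXpos]
      calc Ψ X ≤ X^(2*s) * (g t * X^(-γ)/t) :=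
            mul_le_mul_of_nonneg_left hInf (rpow_nonneg hXpos.le _)
        _ ≤ X^(2*s) * (C * k^β * X^(σ*β + -γ)) :=
            mul_le_mul_of_nonneg_left h4 (rpow_nonneg hXpos.le _)
        _ = C * k^β * (X^(2*s) * X^(σ*β + -γ)) := by ring
        _ = C * k^β * X^(2*s + (σ*β + -γ)) := by rw [← Real.rpow_add hXpos]
        _ = C * k^β := by
            rw [show 2*s + (σ*β + -γ) = 0 by linarith, rpow_zero, mul_one]
    -- conclude
    rw [Filter.liminf_eq]
    refine le_csSup ⟨C * k ^ β, ?_⟩ hlow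
    rintro a ha
    obtain ⟨X, haX, hXC⟩ := ((ha : ∀ᶠ X in atTop, a ≤ Ψ X).and_frequently hupp).exists
    exact le_trans haX hXC
  constructor
  · intro k hk
    exact lt_of_lt_of_le (mul_pos hc (rpow_pos_of_pos hk β)) (hmain k hk)
  · refine tendsto_atTop_mono' atTop ?_ ((tendsto_rpow_atTop hβ).const_mul_atTop hc)
    filter_upwards [eventually_gt_atTop (0:ℝ)] with k hk
    exact hmain k hk
end

section
/- Let s ∈ (0,1), n = 1, σ* = 2s - 1 > 0, r₀ > 1, and for r > r₀ define g̃(x) = C·|x|^{σ*} for 3r/2 < |x| < 2r and g̃(x) = 0 otherwise, where C > 0. Then for every x with r₀ < |x| < r, the annulus B_{2r}(x) \ B_{3r/2}(x) in the y-variable (i.e. points y with 3r/2 < |x - y| < 2r) satisfies |y| ≤ 3r for all such y, and consequently (-Δ)^s g̃(x) ≤ -C·c(s)·r^{-1}·∫_{3r/2}^{2r} t^{σ*} dt / r^{2s} ≤ -C·c'(s)·r^{-1} for constants c(s), c'(s) > 0 independent of r and C. -/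
open Real Set MeasureTheory

/-- The one-dimensional fractional Laplacian `(-Δ)^s u (x)` (up to the positive
normalization constant `C_{1,s}`). -/
noncomputable def fracLap1 (s : ℝ) (u : ℝ → ℝ) (x : ℝ) : ℝ :=
  ∫ y : ℝ, (u x - u y) / |x - y| ^ (1 + 2*s)

/-!
Since `g̃` vanishes at `x`, `(-Δ)^s g̃(x) = -∫ g̃(y) |x - y|^{-1-2s} dy`. For `|x| < r` this
integrand is continuous on the compact closure of the annulus (there `|x - y| ≥ r/2`), hence
integrable, and it is nonnegative; on the right half `3r/2 < y < 2r` of the annulus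
`|x - y| ≤ 3r`. This gives
`(-Δ)^s g̃(x) ≤ -C (3r)^{-1-2s} ∫_{3r/2}^{2r} t^{σ*} dt`, and scaling `t = r τ` shows that the
last integral is a positive multiple of `r^{2s}`.
-/

lemma fracLap1_of_eq_zero {s x : ℝ} {u : ℝ → ℝ} (hu : u x = 0) :
    fracLap1 s u x = -∫ y, u y / |x - y| ^ (1 + 2*s) := by
  simp only [fracLap1, hu, zero_sub, neg_div, integral_neg]

lemma integral_rpow_mul_right {σ α β r : ℝ} (hσ : -1 < σ) (hα : 0 ≤ α) (hβ : 0 ≤ β)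
    (hr : 0 ≤ r) :
    ∫ t in (α*r)..(β*r), t ^ σ = (β ^ (σ+1) - α ^ (σ+1)) / (σ+1) * r ^ (σ+1) := by
  rw [integral_rpow (Or.inl hσ), mul_rpow hα hr, mul_rpow hβ hr]
  ring

noncomputable def annularBump (C σ a b : ℝ) (z : ℝ) : ℝ :=
  if a < |z| ∧ |z| < b then C * |z| ^ σ else 0

section annularBump

variable {C σ a b : ℝ}

lemma annularBump_nonneg (hC : 0 ≤ C) (z : ℝ) : 0 ≤ annularBump C σ a b z := by
  unfold annularBump
  split_ifs
  exacts [mul_nonneg hC (rpow_nonneg (abs_nonneg z) σ), le_rfl]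

lemma annularBump_of_abs_le {z : ℝ} (hz : |z| ≤ a) : annularBump C σ a b z = 0 :=
  if_neg fun h => h.1.not_ge hz

lemma annularBump_of_mem_Ioo {z : ℝ} (ha : 0 ≤ a) (hz : z ∈ Ioo a b) :
    annularBump C σ a b z = C * z ^ σ := by
  have hz0 : |z| = z := abs_of_pos (ha.trans_lt hz.1)
  rw [annularBump, hz0, if_pos ⟨hz.1, hz.2⟩]

lemma integrable_annularBump_div {x p : ℝ} (hσ : 0 ≤ σ) (hp : 0 ≤ p) (hx : |x| < a) :
    Integrable (fun y => annularBump C σ a b y / |x - y| ^ p) := by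
  set K : Set ℝ := {y | a ≤ |y| ∧ |y| ≤ b}
  have hK : IsCompact K := by
    refine Metric.isCompact_of_isClosed_isBounded
      ((isClosed_le continuous_const continuous_abs).inter
        (isClosed_le continuous_abs continuous_const)) ?_
    exact (Metric.isBounded_closedBall (x := (0 : ℝ)) (r := b)).subset fun y hy => by
      simpa [Metric.mem_closedBall] using hy.2
  have hcont : ContinuousOn (fun y => C * |y| ^ σ / |x - y| ^ p) K := by
    refine ContinuousOn.div (by fun_prop) (by fun_prop) fun y hy => ?_
    have : 0 < |x - y| := by linarith [hy.1, abs_sub_abs_le_abs_sub y x, abs_sub_comm x y]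
    positivity
  have hsub : {y : ℝ | a < |y| ∧ |y| < b} ⊆ K := fun y hy => ⟨hy.1.le, hy.2.le⟩
  have hmeas : MeasurableSet {y : ℝ | a < |y| ∧ |y| < b} :=
    (measurableSet_lt measurable_const measurable_abs).inter
      (measurableSet_lt measurable_abs measurable_const)
  have hind : (fun y => annularBump C σ a b y / |x - y| ^ p) =
      {y | a < |y| ∧ |y| < b}.indicator (fun y => C * |y| ^ σ / |x - y| ^ p) := by
    funext y
    simp only [annularBump, indicator, mem_ofPred_eq]
    split_ifs <;> simp
  rw [hind]
  exact ((hcont.integrableOn_compact hK).mono_set hsub).integrable_indicator hmeas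

lemma integral_annularBump_div_ge {x p R : ℝ} (hC : 0 ≤ C) (hσ : 0 ≤ σ) (hp : 0 ≤ p)
    (hab : a ≤ b) (hx : |x| < a) (hR : |x| + b ≤ R) :
    C / R ^ p * ∫ t in a..b, t ^ σ ≤ ∫ y, annularBump C σ a b y / |x - y| ^ p := by
  have ha : 0 < a := (abs_nonneg x).trans_lt hx
  have hint := integrable_annularBump_div (C := C) (b := b) hσ hp hx
  calc C / R ^ p * ∫ t in a..b, t ^ σ = ∫ y in Ioo a b, C / R ^ p * y ^ σ := by
        rw [intervalIntegral.integral_of_le hab, integral_Ioc_eq_integral_Ioo,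
          integral_const_mul]
    _ ≤ ∫ y in Ioo a b, annularBump C σ a b y / |x - y| ^ p := by
        refine setIntegral_mono_on ?_ hint.integrableOn measurableSet_Ioo fun y hy => ?_
        · refine (Integrable.const_mul ?_ _)
          exact ((intervalIntegral.intervalIntegrable_rpow' (by linarith)).1).mono_set
            Ioo_subset_Ioc_self
        · have hy0 : 0 < y := ha.trans hy.1
          have hxy : 0 < |x - y| := by
            linarith [hy.1, abs_of_pos hy0, abs_sub_abs_le_abs_sub y x, abs_sub_comm x y]
          have hxyR : |x - y| ≤ R := by linarith [hy.2, abs_of_pos hy0, abs_sub x y]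
          rw [annularBump_of_mem_Ioo ha.le hy, div_mul_eq_mul_div, mul_comm C]
          exact div_le_div_of_nonneg_left (by positivity) (by positivity)
            (rpow_le_rpow hxy.le hxyR hp)
    _ ≤ ∫ y, annularBump C σ a b y / |x - y| ^ p :=
        setIntegral_le_integral hint (Filter.Eventually.of_forall fun y =>
          div_nonneg (annularBump_nonneg hC y) (rpow_nonneg (abs_nonneg _) p))

end annularBump

theorem stmt18_general (s : ℝ) (hσ : (0:ℝ) < 2*s - 1) (r₀ : ℝ) :
    ∃ c c' : ℝ, 0 < c ∧ 0 < c' ∧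
      ∀ r : ℝ, r₀ < r → ∀ C : ℝ, 0 < C →
        (∀ x y : ℝ, r₀ < |x| → |x| < r →
          3*r/2 < |x - y| → |x - y| < 2*r → |y| ≤ 3*r) ∧
        ∀ x : ℝ, r₀ < |x| → |x| < r →
          fracLap1 s
              (fun z : ℝ => if 3*r/2 < |z| ∧ |z| < 2*r then C * |z| ^ (2*s - 1)
                else 0) x
            ≤ -C * c * r⁻¹ * (∫ t in (3*r/2)..(2*r), t ^ (2*s - 1)) / r ^ (2*s) ∧
          -C * c * r⁻¹ * (∫ t in (3*r/2)..(2*r), t ^ (2*s - 1)) / r ^ (2*s)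
            ≤ -C * c' * r⁻¹ := by
  set K : ℝ := ((2:ℝ) ^ (2*s) - (3/2:ℝ) ^ (2*s)) / (2*s)
  have hK : 0 < K := div_pos (sub_pos.2 (rpow_lt_rpow (by norm_num) (by norm_num) (by linarith)))
    (by linarith)
  refine ⟨3 ^ (-(1 + 2*s)), 3 ^ (-(1 + 2*s)) * K, by positivity, by positivity,
    fun r _ C hC => ⟨fun x y _ hx _ hxy => ?_, fun x _ hx => ?_⟩⟩
  · linarith [abs_sub_abs_le_abs_sub y x, abs_sub_comm y x]
  have hr : 0 < r := (abs_nonneg x).trans_lt hx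
  have hI : ∫ t in (3*r/2)..(2*r), t ^ (2*s - 1) = K * r ^ (2*s) := by
    have := integral_rpow_mul_right (σ := 2*s - 1) (α := 3/2) (β := 2) (by linarith)
      (by norm_num) (by norm_num) hr.le
    rwa [sub_add_cancel, show 3/2 * r = 3*r/2 by ring] at this
  have h3r : (3*r) ^ (1 + 2*s) = 3 ^ (1 + 2*s) * r * r ^ (2*s) := by
    rw [mul_rpow (by norm_num) hr.le, rpow_add hr, rpow_one, mul_assoc]
  have hbound := integral_annularBump_div_ge (C := C) (σ := 2*s - 1) (a := 3*r/2) (b := 2*r)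
    (x := x) (R := 3*r) (p := 1 + 2*s) hC.le hσ.le (by linarith) (by linarith) (by linarith)
    (by linarith)
  constructor
  · change fracLap1 s (annularBump C (2*s - 1) (3*r/2) (2*r)) x ≤ _
    rw [fracLap1_of_eq_zero (annularBump_of_abs_le (z := x) (by linarith))]
    refine (neg_le_neg hbound).trans_eq ?_
    rw [h3r, rpow_neg (by norm_num)]
    field_simp
  · rw [hI]
    exact le_of_eq (by field_simp)

/-- estimate (3.10) in Lemma 3.3: Let `n = 1`, `σ* = 2s - 1 > 0`,
`r₀ > 1`, and for `r > r₀` let `g̃(x) = C |x|^{σ*}` for `3r/2 < |x| < 2r`, `= 0`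
otherwise, with `C > 0`. Then for every `x` with `r₀ < |x| < r`, every `y` with
`3r/2 < |x - y| < 2r` satisfies `|y| ≤ 3r`, and there are constants
`c, c' > 0` depending only on `s` (independent of `r` and `C`) with
`(-Δ)^s g̃(x) ≤ -C c r⁻¹ (∫_{3r/2}^{2r} t^{σ*} dt)/r^{2s} ≤ -C c' r⁻¹`. -/
theorem stmt18 (s : ℝ) (hs : s ∈ Set.Ioo (0:ℝ) 1) (hσ : (0:ℝ) < 2*s - 1)
    (r₀ : ℝ) (hr₀ : 1 < r₀) :
    ∃ c c' : ℝ, 0 < c ∧ 0 < c' ∧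
      ∀ r : ℝ, r₀ < r → ∀ C : ℝ, 0 < C →
        (∀ x y : ℝ, r₀ < |x| → |x| < r →
          3*r/2 < |x - y| → |x - y| < 2*r → |y| ≤ 3*r) ∧
        ∀ x : ℝ, r₀ < |x| → |x| < r →
          fracLap1 s
              (fun z : ℝ => if 3*r/2 < |z| ∧ |z| < 2*r then C * |z| ^ (2*s - 1)
                else 0) x
            ≤ -C * c * r⁻¹ * (∫ t in (3*r/2)..(2*r), t ^ (2*s - 1)) / r ^ (2*s) ∧
          -C * c * r⁻¹ * (∫ t in (3*r/2)..(2*r), t ^ (2*s - 1)) / r ^ (2*s)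
            ≤ -C * c' * r⁻¹ :=
  stmt18_general s hσ r₀
end
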